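/- Under the coverage assumption Q(x) ∈ 𝒫(x) for all x (where 𝒫(x) is the Wasserstein ball of radius r_N centered at P̂(x)) and the Lipschitz assumption |h(x,s₁)−h(x,s₂)| ≤ c_p d(s₁,s₂), the DRO optimal value Ĵ_N = min_x max_{P∈𝒫(x)} 𝔼_P[h(x,ξ)] and the out-of-sample value J_N = 𝔼_{Q(x̂_N)}[h(x̂_N,ξ)] of a DRO-optimal solution x̂_N satisfy Ĵ_N − 2 c_p r_N ≤ J_N ≤ Ĵ_N. -/

import Mathlib

/-!
Integrating `|f s₁ - f s₂| ≤ c · d(s₁, s₂)` against a coupling of `P` and `P̂` (the easy half of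
Kantorovich–Rubinstein duality) shows that every distribution in the Wasserstein ball of radius `r`
around `P̂(x̂)` has expected cost within `c r` of the nominal one. The true distribution `Q(x̂)` lies
in the ball, so its expected cost is at most the supremum over the ball, the DRO value `Ĵ`; the
worst-case distribution attaining `Ĵ` lies in the ball as well, so the two expected costs differ by
at most `2 c r`.
-/

open MeasureTheory
open scoped ENNReal

def IsCoupling {Ξ : Type*} [MeasurableSpace Ξ] (P Q : Measure Ξ) (γ : Measure (Ξ × Ξ)) : Prop :=
  γ.map Prod.fst = P ∧ γ.map Prod.snd = Q

/-- The L¹-Wasserstein distance. When `P` and `Q` admit no coupling (for instance when their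
total masses differ) the infimum is over the empty set and the value is the junk `0`. -/
noncomputable def wassersteinDist {Ξ : Type*} [MeasurableSpace Ξ] [PseudoMetricSpace Ξ]
    (P Q : Measure Ξ) : ℝ :=
  sInf {r : ℝ | ∃ γ : Measure (Ξ × Ξ), IsCoupling P Q γ ∧ ∫ p, dist p.1 p.2 ∂γ = r}

namespace IsCoupling

variable {Ξ : Type*} [MeasurableSpace Ξ] {P Q : Measure Ξ} {γ : Measure (Ξ × Ξ)}

lemma prod [IsProbabilityMeasure P] [IsProbabilityMeasure Q] : IsCoupling P Q (P.prod Q) :=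
  ⟨by simp, by simp⟩

lemma isProbabilityMeasure [IsProbabilityMeasure P] (hγ : IsCoupling P Q γ) :
    IsProbabilityMeasure γ := by
  constructor
  rw [← Set.preimage_univ (f := Prod.fst), ← Measure.map_apply measurable_fst MeasurableSet.univ,
    hγ.1, measure_univ]

variable [PseudoMetricSpace Ξ] [CompactSpace Ξ] [OpensMeasurableSpace Ξ]

lemma abs_integral_sub_le [IsProbabilityMeasure P] (hγ : IsCoupling P Q γ) {K : NNReal}
    {f : Ξ → ℝ} (hf : LipschitzWith K f) :
    |∫ s, f s ∂P - ∫ s, f s ∂Q| ≤ K * ∫ p, dist p.1 p.2 ∂γ := by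
  have := hγ.isProbabilityMeasure
  have hfc := hf.continuous
  have integrable {g : Ξ × Ξ → ℝ} (hg : Continuous g) : Integrable g γ :=
    hg.integrable_of_hasCompactSupport (.of_compactSpace g)
  have hf₁ : Integrable (fun p : Ξ × Ξ => f p.1) γ := integrable (by fun_prop)
  have hf₂ : Integrable (fun p : Ξ × Ξ => f p.2) γ := integrable (by fun_prop)
  rw [← hγ.1, ← hγ.2, integral_map measurable_fst.aemeasurable hfc.aestronglyMeasurable,
    integral_map measurable_snd.aemeasurable hfc.aestronglyMeasurable,
    ← integral_sub hf₁ hf₂, ← integral_const_mul]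
  refine (abs_integral_le_integral_abs).trans <|
    integral_mono (hf₁.sub hf₂).abs (integrable (by fun_prop)) fun p => ?_
  simpa [Real.dist_eq] using hf.dist_le_mul p.1 p.2

end IsCoupling

section WassersteinBall

variable {Ξ : Type*} [MeasurableSpace Ξ] [PseudoMetricSpace Ξ] [CompactSpace Ξ]
  [OpensMeasurableSpace Ξ]

lemma abs_integral_sub_le_mul_wassersteinDist {P Q : Measure Ξ} [IsProbabilityMeasure P]
    [IsProbabilityMeasure Q] {K : NNReal} {f : Ξ → ℝ} (hf : LipschitzWith K f) :
    |∫ s, f s ∂P - ∫ s, f s ∂Q| ≤ K * wassersteinDist P Q := by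
  rw [wassersteinDist, ← smul_eq_mul, ← Real.sInf_smul_of_nonneg K.coe_nonneg]
  refine le_csInf (Set.Nonempty.smul_set ⟨_, P.prod Q, .prod, rfl⟩) ?_
  rintro _ ⟨_, ⟨γ, hγ, rfl⟩, rfl⟩
  exact hγ.abs_integral_sub_le hf

lemma abs_integral_sub_le_of_wassersteinDist_le {P Q : Measure Ξ} [IsProbabilityMeasure P]
    [IsProbabilityMeasure Q] {K : NNReal} {f : Ξ → ℝ} (hf : LipschitzWith K f) {r : ℝ}
    (hPQ : wassersteinDist P Q ≤ r) :
    |∫ s, f s ∂P - ∫ s, f s ∂Q| ≤ K * r :=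
  (abs_integral_sub_le_mul_wassersteinDist hf).trans (by gcongr)

end WassersteinBall

theorem dro_out_of_sample_bounds_general
    {X Ξ : Type*} [MeasurableSpace Ξ] [MetricSpace Ξ] [CompactSpace Ξ] [BorelSpace Ξ]
    (Phat Q : X → Measure Ξ) (rN cp : ℝ) (hcp : 0 ≤ cp)
    (hPhatProb : ∀ x, IsProbabilityMeasure (Phat x))
    (Pamb : X → Set (Measure Ξ))
    (hPamb : ∀ x, Pamb x =
      {P : Measure Ξ | IsProbabilityMeasure P ∧ wassersteinDist P (Phat x) ≤ rN})
    (hcov : ∀ x, Q x ∈ Pamb x)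
    (h : X → Ξ → ℝ)
    (hLip : ∀ x s₁ s₂, |h x s₁ - h x s₂| ≤ cp * dist s₁ s₂)
    (xhat : X)
    (hmin : sSup ((fun P => ∫ s, h xhat s ∂P) '' Pamb xhat) =
      ⨅ x, sSup ((fun P => ∫ s, h x s ∂P) '' Pamb x))
    (hattain : ∃ QW ∈ Pamb xhat,
      (∫ s, h xhat s ∂QW) = sSup ((fun P => ∫ s, h xhat s ∂P) '' Pamb xhat)) :
    (⨅ x, sSup ((fun P => ∫ s, h x s ∂P) '' Pamb x)) - 2 * cp * rN ≤
        ∫ s, h xhat s ∂(Q xhat) ∧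
      (∫ s, h xhat s ∂(Q xhat)) ≤ ⨅ x, sSup ((fun P => ∫ s, h x s ∂P) '' Pamb x) := by
  have := hPhatProb xhat
  have hball : ∀ P ∈ Pamb xhat,
      |∫ s, h xhat s ∂P - ∫ s, h xhat s ∂(Phat xhat)| ≤ cp * rN := by
    intro P hP
    rw [hPamb] at hP
    obtain ⟨_, hPr⟩ := hP
    exact abs_integral_sub_le_of_wassersteinDist_le
      (K := ⟨cp, hcp⟩) (.of_dist_le_mul fun s₁ s₂ => hLip xhat s₁ s₂) hPr
  obtain ⟨QW, hQW, hQWsup⟩ := hattain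
  have hQW_near := abs_le.1 (hball QW hQW)
  have hQ_near := abs_le.1 (hball (Q xhat) (hcov xhat))
  rw [← hmin]
  constructor
  · linarith
  · refine le_csSup ⟨∫ s, h xhat s ∂(Phat xhat) + cp * rN, ?_⟩ ⟨Q xhat, hcov xhat, rfl⟩
    rintro _ ⟨P, hP, rfl⟩
    linarith [abs_le.1 (hball P hP)]

/-- With Wasserstein-ball ambiguity sets `𝒫(x)` of radius `r_N` around the
nominal distributions `P̂(x)`, under coverage `Q(x) ∈ 𝒫(x)` and uniform Lipschitz
continuity of `h` in its second argument, the DRO value `Ĵ_N` and the out-of-sample value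
`J_N = 𝔼_{Q(x̂_N)}[h(x̂_N,ξ)]` of a DRO-optimal solution satisfy
`Ĵ_N − 2 c_p r_N ≤ J_N ≤ Ĵ_N`. -/
theorem dro_out_of_sample_bounds
    {X Ξ : Type*} [Nonempty X] [MeasurableSpace Ξ] [MetricSpace Ξ] [CompactSpace Ξ] [BorelSpace Ξ]
    (Phat Q : X → Measure Ξ) (rN cp : ℝ) (hcp : 0 ≤ cp) (hrN : 0 ≤ rN)
    (hPhatProb : ∀ x, IsProbabilityMeasure (Phat x))
    (hQProb : ∀ x, IsProbabilityMeasure (Q x))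
    (Pamb : X → Set (Measure Ξ))
    (hPamb : ∀ x, Pamb x =
      {P : Measure Ξ | IsProbabilityMeasure P ∧ wassersteinDist P (Phat x) ≤ rN})
    (hcov : ∀ x, Q x ∈ Pamb x)
    (h : X → Ξ → ℝ)
    (hLip : ∀ x s₁ s₂, |h x s₁ - h x s₂| ≤ cp * dist s₁ s₂)
    (xhat : X)
    (hmin : sSup ((fun P => ∫ s, h xhat s ∂P) '' Pamb xhat) =
      ⨅ x, sSup ((fun P => ∫ s, h x s ∂P) '' Pamb x))
    (hattain : ∃ QW ∈ Pamb xhat,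
      (∫ s, h xhat s ∂QW) = sSup ((fun P => ∫ s, h xhat s ∂P) '' Pamb xhat)) :
    (⨅ x, sSup ((fun P => ∫ s, h x s ∂P) '' Pamb x)) - 2 * cp * rN ≤
        ∫ s, h xhat s ∂(Q xhat) ∧
      (∫ s, h xhat s ∂(Q xhat)) ≤ ⨅ x, sSup ((fun P => ∫ s, h x s ∂P) '' Pamb x) :=
  dro_out_of_sample_bounds_general Phat Q rN cp hcp hPhatProb Pamb hPamb hcov h hLip xhat hmin
    hattain
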